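/- For every n ≥ 1, the following polynomial identity holds in ℤ[q,t,u,v]: Σ_{p ∈ PK(n)} q^{luck(p)} · t^{ω_1(p)} · u^{i_1(p)} · v^{i_m(p)} = q·t·(uv)^2 · Σ_{k=0}^{n−1} (uv)^k R_k(t) · Σ_{r=0}^{n−1−k} h_{r,1,1} · v^r · R_{n−1−k−r}(q). -/

import Mathlib

open scoped Classical
open Finset

noncomputable section

/-- The set of positive nondecreasing sequences of length `n` bounded above by `b` is finite. -/
lemma boundedSeq_finite (n : ℕ) (b : ℕ → ℕ) :
    {p : Fin n → ℕ | Monotone p ∧ ∀ i : Fin n, 1 ≤ p i ∧ p i ≤ b i}.Finite := by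
  have h : {p : Fin n → ℕ | Monotone p ∧ ∀ i : Fin n, 1 ≤ p i ∧ p i ≤ b i} ⊆
      Set.pi Set.univ (fun i : Fin n => Set.Iic (b i)) := by
    intro p hp
    rw [Set.mem_pi]
    intro i _
    exact (hp.2 i).2
  exact (Set.Finite.pi fun i : Fin n => Set.finite_Iic (b (i : ℕ))).subset h

/-- The finset of nondecreasing sequences `p : Fin n → ℕ` of positive integers
with `p i ≤ b i` for all `i`. -/
def BSeq (n : ℕ) (b : ℕ → ℕ) : Finset (Fin n → ℕ) := (boundedSeq_finite n b).toFinset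

/-- `PK m n` : the u-parking distributions of length `n`, i.e. nondecreasing sequences
of positive integers with `p i ≤ m*(i-1)+1` (here indexed from `0`, so `p i ≤ m*i+1`). -/
def PK (m n : ℕ) : Finset (Fin n → ℕ) := BSeq n (fun i => m * i + 1)

/-- `luck p` : the number of indices `i` with `p i = m*(i-1)+1` (0-indexed: `m*i+1`). -/
def luck (m : ℕ) {n : ℕ} (p : Fin n → ℕ) : ℕ :=
  (Finset.univ.filter (fun i : Fin n => p i = m * (i : ℕ) + 1)).card

/-- `freq j p` = `ω_j(p)` : the number of indices `i` with `p i = j`. -/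
def freq (j : ℕ) {n : ℕ} (p : Fin n → ℕ) : ℕ :=
  (Finset.univ.filter (fun i : Fin n => p i = j)).card

/-- `hcnt m n k r` = `h_{n,k,r}` : the number of nondecreasing sequences of positive
integers with `p_i ≤ m*(i+k-1) - r` for `1 ≤ i ≤ n` (0-indexed: `p i ≤ m*(i+k) - r`). -/
def hcnt (m n k r : ℕ) : ℕ := (BSeq n (fun i => m * (i + k) - r)).card

/-- `Cnt m n k` = `C_{n,k}` : the number of `p ∈ PK m n` with `luck p = k`. -/
def Cnt (m n k : ℕ) : ℕ := ((PK m n).filter (fun p => luck m p = k)).card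

/-- `Rpoly m n` = `R_n(q) = Σ_k C_{n,k} q^k ∈ ℤ[q]`. -/
def Rpoly (m n : ℕ) : Polynomial ℤ :=
  ∑ k ∈ Finset.range (n + 1), (Cnt m n k : Polynomial ℤ) * Polynomial.X ^ k

/-- `hfull t k` : the complete homogeneous symmetric polynomial of degree `k`
in variables `q_0, …, q_{t-1}`, i.e. the sum of all monomials of total degree `k`. -/
def hfull (t k : ℕ) : MvPolynomial (Fin t) ℤ :=
  ∑ α ∈ Finset.Nat.antidiagonalTuple t k, ∏ i : Fin t, MvPolynomial.X i ^ α i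

/-- `ffix m p ℓ` = `i_ℓ(p)` : the first fixed point of type `ℓ`, the smallest `k` with
`2 ≤ k ≤ n` and `p_k ≥ m*(k-2)+1+ℓ` (1-indexed), or `n+1` if there is none. -/
def ffix (m : ℕ) {n : ℕ} (p : Fin n → ℕ) (ℓ : ℕ) : ℕ :=
  sInf ({k | 2 ≤ k ∧ ∃ i : Fin n, (i : ℕ) + 1 = k ∧ m * (k - 2) + 1 + ℓ ≤ p i} ∪ {n + 1})

/-- The extended first fixed points: `i_0 = 2`, `i_{m+1} = n+1`, and `i_ℓ = ffix m p ℓ`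
for `1 ≤ ℓ ≤ m`. -/
def ffixE (m : ℕ) {n : ℕ} (p : Fin n → ℕ) (j : ℕ) : ℕ :=
  if j = 0 then 2 else if j = m + 1 then n + 1 else ffix m p j

/-- `pget p k` = `p_k` (1-indexed), `0` out of range. -/
def pget {n : ℕ} (p : Fin n → ℕ) (k : ℕ) : ℕ := if h : k - 1 < n then p ⟨k - 1, h⟩ else 0

/-- The `(ℓ+1)`-st part `P_{ℓ+1}` (for `0 ≤ ℓ ≤ m`) of the first-return decomposition of `p`:
the list `(p_k - (p_{i_ℓ} - 1))` for `i_ℓ ≤ k ≤ i_{ℓ+1} - 1`. -/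
def FRD (m : ℕ) {n : ℕ} (p : Fin n → ℕ) (ℓ : ℕ) : List ℕ :=
  (List.range (ffixE m p (ℓ + 1) - ffixE m p ℓ)).map
    (fun t => pget p (ffixE m p ℓ + t) - (pget p (ffixE m p ℓ) - 1))

/-- A list is a u-parking distribution: nondecreasing, with `l.get i ∈ [1, m*i+1]`
(0-indexed). -/
def isPKlist (m : ℕ) (l : List ℕ) : Prop :=
  l.Pairwise (· ≤ ·) ∧ ∀ i : Fin l.length, 1 ≤ l.get i ∧ l.get i ≤ m * (i : ℕ) + 1

/-- `θ(p)` : the nondecreasing rearrangement of the concatenation of `p` with the list of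
all `j ∈ {1, …, m*n-m+1}` with `j ≢ 1 (mod m)`. -/
def theta (m n : ℕ) (p : Fin n → ℕ) : List ℕ :=
  Multiset.sort
    ((List.ofFn p : Multiset ℕ) +
      (((List.range (m * n - m + 1)).map (· + 1)).filter
        (fun j => ¬ j ≡ 1 [MOD m]) : List ℕ)) (· ≤ ·)

/-- Parking distributions on the `m`-caterpillar of length `n`, as nondecreasing lists. -/
def PKcat (m n : ℕ) : Set (List ℕ) :=
  {a | a.length = m * n - m + 1 ∧ a.Pairwise (· ≤ ·) ∧
       (∀ x ∈ a, 1 ≤ x ∧ x ≤ m * n - m + 1) ∧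
       (∀ i : ℕ, 1 ≤ i → i ≤ n →
         m * (i - 1) + 1 ≤ (a.filter (fun x => x ≤ m * (i - 1) + 1)).length) ∧
       (∀ j : ℕ, 1 ≤ j → j ≤ m * n - m + 1 → ¬ j ≡ 1 [MOD m] → j ∈ a)}

/-!
Every `p ∈ PK(n)` starts with `p_1 = 1`. Cutting the rest of `p` at its first fixed points
`i_1 ≤ i_m` gives three blocks: positions `2, …, i_1 - 1` form a u-parking distribution `a`
carrying all of `ω_1(p)` but the first entry; positions `i_1, …, i_m - 1`, lowered by
`m(i_1 - 2) + 1`, form a sequence counted by `h_{r,1,1}`; positions `i_m, …, n`, lowered by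
`m(i_m - 1)`, form a u-parking distribution `c` carrying all of `luck(p)` but the first
position. This bijection yields the identity with `Σ_a t^{ω_1(a)}` in place of `R_k(t)`.
Applied again with the roles of the outer blocks exchanged, the same decomposition shows by
strong induction that `ω_1` and `luck` are equidistributed on `PK(k)`.
-/

lemma mem_BSeq {n : ℕ} {b : ℕ → ℕ} {p : Fin n → ℕ} :
    p ∈ BSeq n b ↔ Monotone p ∧ ∀ i : Fin n, 1 ≤ p i ∧ p i ≤ b i := by
  rw [BSeq, Set.Finite.mem_toFinset]
  rfl

lemma Fin.monotone_append {α : Type*} [Preorder α] {a b : ℕ} {u : Fin a → α} {v : Fin b → α}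
    (hu : Monotone u) (hv : Monotone v) (huv : ∀ i j, u i ≤ v j) :
    Monotone (Fin.append u v) := by
  intro i j hij
  induction i using Fin.addCases with
  | left i =>
    induction j using Fin.addCases with
    | left j => simpa using hu ((Fin.strictMono_castAdd b).le_iff_le.mp hij)
    | right j => simpa using huv i j
  | right i =>
    induction j using Fin.addCases with
    | left j => rw [Fin.le_def] at hij; simp at hij; omega
    | right j => simpa using hv ((Fin.natAdd_le_natAdd_iff a).mp hij)

lemma Fin.monotone_cons_iff {α : Type*} [Preorder α] {n : ℕ} {x : α} {q : Fin n → α} :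
    Monotone (Fin.cons x q : Fin (n + 1) → α) ↔ (∀ i, x ≤ q i) ∧ Monotone q := by
  refine ⟨fun h => ⟨fun i => by simpa using h (Fin.zero_le i.succ),
    fun i j hij => by simpa using h (Fin.succ_le_succ_iff.mpr hij)⟩, fun ⟨hx, hq⟩ i j hij => ?_⟩
  induction i using Fin.cases with
  | zero => induction j using Fin.cases <;> simp [hx]
  | succ i =>
    induction j using Fin.cases with
    | zero => simp at hij
    | succ j => simpa using hq (Fin.succ_le_succ_iff.mp hij)

lemma Fin.card_filter_univ_add {a b : ℕ} (P : Fin (a + b) → Prop) [DecidablePred P] :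
    #{i | P i} = #{i : Fin a | P (Fin.castAdd b i)} + #{j : Fin b | P (Fin.natAdd a j)} := by
  simp only [Finset.card_filter, Fin.sum_univ_add]

lemma cons_one_mem_PK_iff {m N : ℕ} {q : Fin N → ℕ} :
    (Fin.cons 1 q : Fin (N + 1) → ℕ) ∈ PK m (N + 1) ↔ q ∈ BSeq N (fun j => m * (j + 1) + 1) := by
  simp only [PK, mem_BSeq, Fin.monotone_cons_iff, Fin.forall_fin_succ, Fin.cons_zero,
    Fin.cons_succ, Fin.val_zero, Fin.val_succ]
  grind

lemma cons_one_tail_of_mem_PK {m N : ℕ} {p : Fin (N + 1) → ℕ} (hp : p ∈ PK m (N + 1)) :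
    Fin.cons 1 (Fin.tail p) = p := by
  have := ((mem_BSeq.mp hp).2 0)
  simp only [Fin.val_zero, mul_zero, zero_add] at this
  rw [← Fin.cons_self_tail p, Fin.tail_cons, show p 0 = 1 by omega]

lemma sum_PK_succ {M : Type*} [AddCommMonoid M] (m N : ℕ) (f : (Fin (N + 1) → ℕ) → M) :
    ∑ p ∈ PK m (N + 1), f p = ∑ q ∈ BSeq N (fun j => m * (j + 1) + 1), f (Fin.cons 1 q) := by
  refine Finset.sum_nbij' Fin.tail (fun q => (Fin.cons 1 q : Fin (N + 1) → ℕ))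
    (fun p hp => ?_) (fun q hq => cons_one_mem_PK_iff.mpr hq)
    (fun p hp => cons_one_tail_of_mem_PK hp) (fun q _ => Fin.tail_cons _ _)
    (fun p hp => by rw [cons_one_tail_of_mem_PK hp])
  rw [← cons_one_mem_PK_iff, cons_one_tail_of_mem_PK hp]
  exact hp

lemma two_le_ffix (m : ℕ) {N : ℕ} (p : Fin (N + 1) → ℕ) (ℓ : ℕ) : 2 ≤ ffix m p ℓ :=
  le_csInf ⟨_, Or.inr rfl⟩ (by rintro k (⟨hk, -⟩ | rfl) <;> omega)

lemma ffix_le (m : ℕ) {n : ℕ} (p : Fin n → ℕ) (ℓ : ℕ) : ffix m p ℓ ≤ n + 1 :=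
  Nat.sInf_le (Or.inr rfl)

lemma ffix_mono (m : ℕ) {n : ℕ} (p : Fin n → ℕ) : Monotone (ffix m p) := by
  intro ℓ ℓ' h
  refine le_csInf ⟨_, Or.inr rfl⟩ ?_
  rintro k (⟨hk, i, hi, hp⟩ | hk)
  · exact Nat.sInf_le (Or.inl ⟨hk, i, hi, by omega⟩)
  · exact Nat.sInf_le (Or.inr hk)

-- `q j` is the entry `p_{j+2}` of `p = Fin.cons x q` in the 1-indexed convention of `ffix`.
lemma ffix_cons_eq_iff {m N : ℕ} (x : ℕ) (q : Fin N → ℕ) (ℓ : ℕ) {v : ℕ} (hv : v ≤ N) :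
    ffix m (Fin.cons x q : Fin (N + 1) → ℕ) ℓ = v + 2 ↔
      (∀ j : Fin N, (j : ℕ) < v → q j < m * j + 1 + ℓ) ∧
      (∀ j : Fin N, (j : ℕ) = v → m * v + 1 + ℓ ≤ q j) := by
  rw [ffix, csInf_eq_iff (Set.singleton_nonempty _).inr]
  simp only [Set.mem_union, Set.mem_ofPred_eq, Set.mem_singleton_iff, Fin.exists_fin_succ,
    Fin.val_zero, Fin.cons_zero, Fin.val_succ, Fin.cons_succ]
  constructor
  · rintro ⟨hmem, hleast⟩
    refine ⟨fun j hj => ?_, fun j hj => ?_⟩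
    · by_contra h
      have := hleast (j + 2) (Or.inl ⟨by omega, Or.inr ⟨j, rfl, by simpa using not_lt.mp h⟩⟩)
      omega
    · rcases hmem with ⟨-, ⟨h0, -⟩ | ⟨i, hi, hqi⟩⟩ | h
      · omega
      · obtain rfl : i = j := Fin.ext (by omega)
        simpa [hj] using hqi
      · omega
  · rintro ⟨hbelow, hat⟩
    refine ⟨?_, ?_⟩
    · rcases hv.lt_or_eq with h | h
      · exact Or.inl ⟨by omega, Or.inr ⟨⟨v, h⟩, rfl, by simpa using hat ⟨v, h⟩ rfl⟩⟩
      · exact Or.inr (by omega)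
    · rintro k (⟨hk2, ⟨h0, -⟩ | ⟨i, rfl, hqi⟩⟩ | rfl)
      · omega
      · by_contra h
        have := hbelow i (by omega)
        rw [show (i : ℕ) + 1 + 1 - 2 = i by omega] at hqi
        omega
      · omega

lemma le_of_ffix_cons_eq {m N x ℓ v : ℕ} {q : Fin N → ℕ} (hq : Monotone q)
    (h : ffix m (Fin.cons x q : Fin (N + 1) → ℕ) ℓ = v + 2) (j : Fin N) (hj : v ≤ j) :
    m * v + 1 + ℓ ≤ q j :=
  (((ffix_cons_eq_iff x q ℓ (hj.trans j.is_lt.le)).mp h).2 ⟨v, hj.trans_lt j.is_lt⟩ rfl).trans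
    (hq (Fin.le_iff_val_le_val.mpr hj))

/-- Inverse of cutting `Fin.cons 1 q` at `i_1 = k + 2` and `i_m = k + r + 2`: the middle and
last blocks are lifted by the thresholds `m * k + 1` and `m * (k + r + 1)`. -/
def glue (m : ℕ) {k r s : ℕ} (a : Fin k → ℕ) (b : Fin r → ℕ) (c : Fin s → ℕ) :
    Fin (k + r + s) → ℕ :=
  Fin.append (Fin.append a fun j => b j + (m * k + 1)) fun j => c j + m * (k + r + 1)

lemma glue_injective (m : ℕ) {k r s : ℕ} :
    Function.Injective fun x : (Fin k → ℕ) × (Fin r → ℕ) × (Fin s → ℕ) =>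
      glue m x.1 x.2.1 x.2.2 := by
  rintro ⟨a, b, c⟩ ⟨a', b', c'⟩ h
  have h' := congrFun h
  simp only [Fin.forall_fin_add, glue, Fin.append_left, Fin.append_right, add_left_inj] at h'
  obtain ⟨⟨ha, hb⟩, hc⟩ := h'
  simp only [Prod.mk.injEq]
  exact ⟨funext ha, funext hb, funext hc⟩

section glue

variable {m k r s : ℕ} {a : Fin k → ℕ} {b : Fin r → ℕ} {c : Fin s → ℕ}

lemma glue_mem (hm : 1 ≤ m) (ha : a ∈ PK m k)
    (hb : b ∈ BSeq r (fun i => m * (i + 1) - 1)) (hc : c ∈ PK m s) :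
    glue m a b c ∈ BSeq (k + r + s) (fun j => m * (j + 1) + 1) := by
  rw [PK, mem_BSeq] at ha hc
  rw [mem_BSeq] at hb ⊢
  refine ⟨Fin.monotone_append (Fin.monotone_append ha.1 (hb.1.add_const _) fun i j => ?_)
    (hc.1.add_const _) fun i j => ?_, ?_⟩
  · have := (ha.2 i).2
    have := Nat.mul_le_mul_left m i.is_lt.le
    omega
  · induction i using Fin.addCases with
    | left i =>
      have := (ha.2 i).2
      have := Nat.mul_le_mul_left m i.is_lt.le
      simp only [Fin.append_left, mul_add, mul_one]
      omega
    | right i =>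
      have := (hb.2 i).2
      have := Nat.mul_le_mul_left m (show (i : ℕ) + 1 ≤ r from i.is_lt)
      simp only [Fin.append_right, mul_add, mul_one] at *
      omega
  · simp only [Fin.forall_fin_add, glue, Fin.append_left, Fin.append_right, Fin.val_castAdd,
      Fin.val_natAdd]
    refine ⟨⟨fun i => ?_, fun j => ?_⟩, fun j => ?_⟩
    · have := ha.2 i
      simp only [mul_add, mul_one] at *
      omega
    · have := hb.2 j
      simp only [mul_add, mul_one] at *
      omega
    · have := hc.2 j
      simp only [mul_add, mul_one] at *
      omega

lemma ffix_cons_glue_one (hm : 1 ≤ m) (ha : a ∈ PK m k)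
    (hb : b ∈ BSeq r (fun i => m * (i + 1) - 1)) (hc : c ∈ PK m s) :
    ffix m (Fin.cons 1 (glue m a b c) : Fin (k + r + s + 1) → ℕ) 1 = k + 2 := by
  rw [ffix_cons_eq_iff _ _ _ (by omega)]
  rw [PK, mem_BSeq] at ha hc
  rw [mem_BSeq] at hb
  simp only [Fin.forall_fin_add, glue, Fin.append_left, Fin.append_right, Fin.val_castAdd,
    Fin.val_natAdd]
  refine ⟨⟨⟨fun i _ => ?_, fun j hj => by omega⟩, fun j hj => by omega⟩,
    ⟨fun i hi => by omega, fun j _ => ?_⟩, fun j hj => ?_⟩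
  · have := (ha.2 i).2
    omega
  · have := (hb.2 j).1
    omega
  · have := (hc.2 j).1
    simp only [mul_add, mul_one]
    omega

lemma ffix_cons_glue_m (hm : 1 ≤ m) (ha : a ∈ PK m k)
    (hb : b ∈ BSeq r (fun i => m * (i + 1) - 1)) (hc : c ∈ PK m s) :
    ffix m (Fin.cons 1 (glue m a b c) : Fin (k + r + s + 1) → ℕ) m = k + r + 2 := by
  rw [ffix_cons_eq_iff _ _ _ (by omega)]
  rw [PK, mem_BSeq] at ha hc
  rw [mem_BSeq] at hb
  simp only [Fin.forall_fin_add, glue, Fin.append_left, Fin.append_right, Fin.val_castAdd,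
    Fin.val_natAdd]
  refine ⟨⟨⟨fun i _ => ?_, fun j _ => ?_⟩, fun j hj => by omega⟩,
    ⟨fun i hi => by omega, fun j hj => by omega⟩, fun j _ => ?_⟩
  · have := (ha.2 i).2
    omega
  · have := (hb.2 j).2
    simp only [mul_add, mul_one] at *
    omega
  · have := (hc.2 j).1
    simp only [mul_add, mul_one]
    omega

lemma luck_cons_glue (hm : 1 ≤ m) (ha : a ∈ PK m k)
    (hb : b ∈ BSeq r (fun i => m * (i + 1) - 1)) :
    luck m (Fin.cons 1 (glue m a b c) : Fin (k + r + s + 1) → ℕ) = 1 + luck m c := by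
  rw [PK, mem_BSeq] at ha
  rw [mem_BSeq] at hb
  have hA : #{i : Fin k | a i = m * (i + 1) + 1} = 0 := by
    refine Finset.card_eq_zero.mpr (Finset.filter_eq_empty_iff.mpr fun i _ => ?_)
    have := (ha.2 i).2
    simp only [mul_add, mul_one]
    omega
  have hB : #{j : Fin r | b j + (m * k + 1) = m * (k + j + 1) + 1} = 0 := by
    refine Finset.card_eq_zero.mpr (Finset.filter_eq_empty_iff.mpr fun j _ => ?_)
    have := (hb.2 j).2
    simp only [mul_add, mul_one] at *
    omega
  have hC : #{j : Fin s | c j + m * (k + r + 1) = m * (k + r + j + 1) + 1} = luck m c := by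
    refine congrArg Finset.card (Finset.filter_congr fun j _ => ?_)
    simp only [mul_add, mul_one]
    omega
  rw [luck, Fin.card_filter_univ_succ', Fin.card_filter_univ_add, Fin.card_filter_univ_add]
  simp only [Fin.cons_zero, Fin.cons_succ, Fin.val_zero, Fin.val_succ, glue, Fin.append_left,
    Fin.append_right, Fin.val_castAdd, Fin.val_natAdd, mul_zero, zero_add, if_true]
  rw [hA, hB, hC, zero_add, zero_add]

lemma freq_one_cons_glue (hm : 1 ≤ m)
    (hb : b ∈ BSeq r (fun i => m * (i + 1) - 1)) (hc : c ∈ PK m s) :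
    freq 1 (Fin.cons 1 (glue m a b c) : Fin (k + r + s + 1) → ℕ) = 1 + freq 1 a := by
  rw [PK, mem_BSeq] at hc
  rw [mem_BSeq] at hb
  have hB : #{j : Fin r | b j + (m * k + 1) = 1} = 0 :=
    Finset.card_eq_zero.mpr (Finset.filter_eq_empty_iff.mpr fun j _ => by
      have := (hb.2 j).1
      omega)
  have hC : #{j : Fin s | c j + m * (k + r + 1) = 1} = 0 := by
    refine Finset.card_eq_zero.mpr (Finset.filter_eq_empty_iff.mpr fun j _ => ?_)
    have := (hc.2 j).1
    simp only [mul_add, mul_one]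
    omega
  rw [freq, Fin.card_filter_univ_succ', Fin.card_filter_univ_add, Fin.card_filter_univ_add]
  simp only [Fin.cons_zero, Fin.cons_succ, glue, Fin.append_left, Fin.append_right, if_true]
  rw [hB, hC, add_zero, add_zero, freq]

lemma exists_glue_eq {q : Fin (k + r + s) → ℕ}
    (hq : q ∈ BSeq (k + r + s) (fun j => m * (j + 1) + 1))
    (h1 : ffix m (Fin.cons 1 q : Fin (k + r + s + 1) → ℕ) 1 = k + 2)
    (h2 : ffix m (Fin.cons 1 q : Fin (k + r + s + 1) → ℕ) m = k + r + 2) :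
    ∃ a ∈ PK m k, ∃ b ∈ BSeq r (fun i => m * (i + 1) - 1), ∃ c ∈ PK m s, glue m a b c = q := by
  obtain ⟨hmono, hbd⟩ := mem_BSeq.mp hq
  have below1 := ((ffix_cons_eq_iff 1 q 1 (by omega)).mp h1).1
  have below2 := ((ffix_cons_eq_iff 1 q m (by omega)).mp h2).1
  have hB (j : Fin r) := le_of_ffix_cons_eq hmono h1 (Fin.castAdd s (Fin.natAdd k j)) (by simp)
  have hC (j : Fin s) := le_of_ffix_cons_eq hmono h2 (Fin.natAdd (k + r) j) (by simp)
  have castAdd_mono := (Fin.strictMono_castAdd (n := k + r) s).monotone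
  refine ⟨fun i => q (Fin.castAdd s (Fin.castAdd r i)), ?_,
    fun j => q (Fin.castAdd s (Fin.natAdd k j)) - (m * k + 1), ?_,
    fun j => q (Fin.natAdd (k + r) j) - m * (k + r + 1), ?_, ?_⟩
  · refine mem_BSeq.mpr ⟨hmono.comp (castAdd_mono.comp (Fin.strictMono_castAdd r).monotone),
      fun i => ⟨(hbd _).1, ?_⟩⟩
    have := below1 (Fin.castAdd s (Fin.castAdd r i)) (by simp)
    simp only [Fin.val_castAdd] at this ⊢
    omega
  · refine mem_BSeq.mpr ⟨fun i j hij => Nat.sub_le_sub_right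
      (hmono (castAdd_mono ((Fin.strictMono_natAdd k).monotone hij))) _, fun j => ?_⟩
    have := below2 (Fin.castAdd s (Fin.natAdd k j)) (by simp)
    have := hB j
    simp only [Fin.val_castAdd, Fin.val_natAdd, mul_add, mul_one] at *
    omega
  · refine mem_BSeq.mpr ⟨fun i j hij => Nat.sub_le_sub_right
      (hmono ((Fin.strictMono_natAdd (k + r)).monotone hij)) _, fun j => ?_⟩
    have := (hbd (Fin.natAdd (k + r) j)).2
    have := hC j
    simp only [Fin.val_natAdd, mul_add, mul_one] at *
    omega
  · funext i
    induction i using Fin.addCases with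
    | left i =>
      induction i using Fin.addCases with
      | left i => simp [glue]
      | right j =>
        have := hB j
        simp only [glue, Fin.append_left, Fin.append_right]
        omega
    | right j =>
      have := hC j
      simp only [glue, Fin.append_right, mul_add, mul_one] at *
      omega

end glue

lemma sum_ffix_fiber_eq_sum_prod {M : Type*} [AddCommMonoid M] {m : ℕ} (hm : 1 ≤ m) (k r s : ℕ)
    (F : ℕ → ℕ → M) :
    ∑ q ∈ BSeq (k + r + s) (fun j => m * (j + 1) + 1) with
        ffix m (Fin.cons 1 q : Fin (k + r + s + 1) → ℕ) 1 = k + 2 ∧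
          ffix m (Fin.cons 1 q : Fin (k + r + s + 1) → ℕ) m = k + r + 2,
      F (luck m (Fin.cons 1 q : Fin (k + r + s + 1) → ℕ))
        (freq 1 (Fin.cons 1 q : Fin (k + r + s + 1) → ℕ)) =
      ∑ x ∈ PK m k ×ˢ BSeq r (fun i => m * (i + 1) - 1) ×ˢ PK m s,
        F (1 + luck m x.2.2) (1 + freq 1 x.1) := by
  symm
  refine Finset.sum_nbij (fun x => glue m x.1 x.2.1 x.2.2) (fun x hx => ?_)
    (glue_injective m).injOn (fun q hq => ?_) (fun x hx => ?_)
  · obtain ⟨ha, hb, hc⟩ := Finset.mem_product.mp hx |>.imp_right Finset.mem_product.mp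
    exact Finset.mem_filter.mpr ⟨glue_mem hm ha hb hc, ffix_cons_glue_one hm ha hb hc,
      ffix_cons_glue_m hm ha hb hc⟩
  · obtain ⟨hq, h1, h2⟩ := Finset.mem_filter.mp hq
    obtain ⟨a, ha, b, hb, c, hc, rfl⟩ := exists_glue_eq hq h1 h2
    exact ⟨(a, b, c), Finset.mem_product.mpr ⟨ha, Finset.mem_product.mpr ⟨hb, hc⟩⟩, rfl⟩
  · obtain ⟨ha, hb, hc⟩ := Finset.mem_product.mp hx |>.imp_right Finset.mem_product.mp
    rw [luck_cons_glue hm ha hb, freq_one_cons_glue hm hb hc]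

lemma sum_PK_succ_eq_sum_blocks {M : Type*} [AddCommMonoid M] {m : ℕ} (hm : 1 ≤ m) (N : ℕ)
    (F : ℕ → ℕ → ℕ → ℕ → M) :
    ∑ p ∈ PK m (N + 1), F (luck m p) (freq 1 p) (ffix m p 1) (ffix m p m) =
      ∑ k ∈ Finset.range (N + 1), ∑ r ∈ Finset.range (N + 1 - k),
        ∑ x ∈ PK m k ×ˢ BSeq r (fun i => m * (i + 1) - 1) ×ˢ PK m (N - k - r),
          F (1 + luck m x.2.2) (1 + freq 1 x.1) (k + 2) (k + r + 2) := by
  set g : (Fin (N + 1) → ℕ) → (_ : ℕ) × ℕ := fun p => ⟨ffix m p 1 - 2, ffix m p m - ffix m p 1⟩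
  have hg : ∀ p k r, g p = ⟨k, r⟩ ↔ ffix m p 1 = k + 2 ∧ ffix m p m = k + r + 2 := by
    intro p k r
    have := two_le_ffix m p 1
    have := ffix_mono m p hm
    simp only [g, Sigma.mk.injEq, heq_eq_eq]
    omega
  have maps : ∀ q ∈ BSeq N (fun j => m * (j + 1) + 1), g (Fin.cons 1 q) ∈
      (Finset.range (N + 1)).sigma fun k => Finset.range (N + 1 - k) := by
    intro q _
    have := ffix_le m (Fin.cons 1 q : Fin (N + 1) → ℕ) m
    have := two_le_ffix m (Fin.cons 1 q : Fin (N + 1) → ℕ) 1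
    have := ffix_mono m (Fin.cons 1 q : Fin (N + 1) → ℕ) hm
    simp only [g, Finset.mem_sigma, Finset.mem_range]
    omega
  rw [sum_PK_succ, ← Finset.sum_fiberwise_of_maps_to maps, Finset.sum_sigma]
  refine Finset.sum_congr rfl fun k hk => Finset.sum_congr rfl fun r hr => ?_
  obtain ⟨s, rfl⟩ : ∃ s, N = k + r + s := ⟨N - k - r, by simp at hk hr; omega⟩
  rw [show k + r + s - k - r = s by omega,
    ← sum_ffix_fiber_eq_sum_prod hm k r s fun l w => F l w (k + 2) (k + r + 2)]
  refine Finset.sum_congr (Finset.filter_congr fun q _ => hg _ k r) fun q hq => ?_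
  obtain ⟨-, h1, h2⟩ := Finset.mem_filter.mp hq
  rw [h1, h2]

lemma sum_PK_succ_monomial {R : Type*} [CommSemiring R] {m : ℕ} (hm : 1 ≤ m) (N : ℕ)
    (x y u v : R) :
    ∑ p ∈ PK m (N + 1), x ^ luck m p * y ^ freq 1 p * u ^ ffix m p 1 * v ^ ffix m p m =
      ∑ k ∈ Finset.range (N + 1), ∑ r ∈ Finset.range (N + 1 - k),
        (x * ∑ c ∈ PK m (N - k - r), x ^ luck m c) * #(BSeq r fun i => m * (i + 1) - 1) *
          (y * ∑ a ∈ PK m k, y ^ freq 1 a) * u ^ (k + 2) * v ^ (k + r + 2) := by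
  rw [sum_PK_succ_eq_sum_blocks hm N fun l w i j => x ^ l * y ^ w * u ^ i * v ^ j]
  refine Finset.sum_congr rfl fun k _ => Finset.sum_congr rfl fun r _ => ?_
  simp only [Finset.sum_product, Finset.card_eq_sum_ones, Nat.cast_sum, Nat.cast_one,
    Finset.mul_sum, Finset.sum_mul]
  refine Finset.sum_congr rfl fun a _ => Finset.sum_congr rfl fun b _ =>
    Finset.sum_congr rfl fun c _ => ?_
  ring

lemma sum_range_sum_range_reflect {M : Type*} [AddCommMonoid M] (N : ℕ) (f : ℕ → ℕ → ℕ → M) :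
    ∑ k ∈ Finset.range (N + 1), ∑ r ∈ Finset.range (N + 1 - k), f k r (N - k - r) =
      ∑ k ∈ Finset.range (N + 1), ∑ r ∈ Finset.range (N + 1 - k), f (N - k - r) r k := by
  rw [Finset.sum_sigma', Finset.sum_sigma']
  have mem : ∀ x ∈ (Finset.range (N + 1)).sigma fun k => Finset.range (N + 1 - k),
      (⟨N - x.1 - x.2, x.2⟩ : (_ : ℕ) × ℕ) ∈
        (Finset.range (N + 1)).sigma fun k => Finset.range (N + 1 - k) := by
    rintro ⟨k, r⟩ h
    simp only [Finset.mem_sigma, Finset.mem_range] at h ⊢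
    omega
  have invol : ∀ x ∈ (Finset.range (N + 1)).sigma fun k => Finset.range (N + 1 - k),
      (⟨N - (N - x.1 - x.2) - x.2, x.2⟩ : (_ : ℕ) × ℕ) = x := by
    rintro ⟨k, r⟩ h
    simp only [Finset.mem_sigma, Finset.mem_range] at h
    simp only [Sigma.mk.injEq, heq_eq_eq, and_true]
    omega
  refine Finset.sum_nbij' (fun x => ⟨N - x.1 - x.2, x.2⟩) (fun x => ⟨N - x.1 - x.2, x.2⟩)
    mem mem invol invol ?_
  rintro ⟨k, r⟩ h
  simp only [Finset.mem_sigma, Finset.mem_range] at h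
  rw [show N - (N - k - r) - r = k by omega]

lemma sum_pow_freq_one_eq_sum_pow_luck {R : Type*} [CommSemiring R] {m : ℕ} (hm : 1 ≤ m)
    (y : R) (n : ℕ) : ∑ p ∈ PK m n, y ^ freq 1 p = ∑ p ∈ PK m n, y ^ luck m p := by
  -- In the block decomposition `ω_1` is carried by the first block and `luck` by the last;
  -- reflecting `k ↦ N - k - r` exchanges their lengths, and induction applies to the first.
  induction n using Nat.strong_induction_on with
  | _ n ih =>
    cases n with
    | zero => simp [freq, luck]
    | succ N =>
      have hfreq := sum_PK_succ_monomial hm N 1 y 1 1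
      have hluck := sum_PK_succ_monomial hm N y 1 1 1
      simp only [one_pow, mul_one, one_mul, Finset.sum_const, nsmul_one] at hfreq hluck
      rw [hfreq, hluck]
      refine Eq.trans ?_ (sum_range_sum_range_reflect N fun k r s =>
        (y * ∑ c ∈ PK m k, y ^ luck m c) * #(BSeq r fun i => m * (i + 1) - 1) * #(PK m s))
      refine Finset.sum_congr rfl fun k hk => Finset.sum_congr rfl fun r _ => ?_
      rw [ih k (Finset.mem_range.mp hk)]
      ring

lemma aeval_Rpoly {R : Type*} [CommSemiring R] [Algebra ℤ R] (m n : ℕ) (y : R) :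
    Polynomial.aeval y (Rpoly m n) = ∑ p ∈ PK m n, y ^ luck m p := by
  have maps : ∀ p ∈ PK m n, luck m p ∈ Finset.range (n + 1) := fun p _ =>
    Finset.mem_range.mpr (Nat.lt_succ_of_le ((Finset.card_filter_le _ _).trans (by simp)))
  rw [← Finset.sum_fiberwise_of_maps_to maps, Rpoly, map_sum]
  refine Finset.sum_congr rfl fun k _ => ?_
  rw [Finset.sum_congr rfl fun p hp => by rw [(Finset.mem_filter.mp hp).2], Finset.sum_const,
    nsmul_eq_mul, Cnt]
  simp

theorem stmt8 (m : ℕ) (hm : 1 ≤ m) (n : ℕ) (hn : 1 ≤ n) :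
    ∑ p ∈ PK m n,
        (MvPolynomial.X 0 ^ luck m p * MvPolynomial.X 1 ^ freq 1 p *
          MvPolynomial.X 2 ^ ffix m p 1 * MvPolynomial.X 3 ^ ffix m p m :
          MvPolynomial (Fin 4) ℤ) =
      MvPolynomial.X 0 * MvPolynomial.X 1 * (MvPolynomial.X 2 * MvPolynomial.X 3) ^ 2 *
        ∑ k ∈ Finset.range n,
          (MvPolynomial.X 2 * MvPolynomial.X 3) ^ k *
            Polynomial.aeval (MvPolynomial.X 1 : MvPolynomial (Fin 4) ℤ) (Rpoly m k) *
            ∑ r ∈ Finset.range (n - k),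
              (hcnt m r 1 1 : MvPolynomial (Fin 4) ℤ) * MvPolynomial.X 3 ^ r *
                Polynomial.aeval (MvPolynomial.X 0 : MvPolynomial (Fin 4) ℤ)
                  (Rpoly m (n - 1 - k - r)) := by
  obtain ⟨N, rfl⟩ : ∃ N, n = N + 1 := ⟨n - 1, by omega⟩
  rw [sum_PK_succ_monomial hm, Finset.mul_sum]
  refine Finset.sum_congr rfl fun k _ => ?_
  rw [Finset.mul_sum (Finset.range (N + 1 - k)), Finset.mul_sum (Finset.range (N + 1 - k))]
  refine Finset.sum_congr rfl fun r _ => ?_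
  rw [Nat.add_sub_cancel, aeval_Rpoly, aeval_Rpoly, sum_pow_freq_one_eq_sum_pow_luck hm, hcnt]
  ring

end
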